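/- In Construction 1 with s = ⌊(m-1)/2⌋ and t = ⌊(m+2)/2⌋, for any fixed (e,δ) ∈ F_2^t × F_2^t, the number of sets S_{c,α} (over all (c,α) ∈ F_2^t × F_2^t) that are orthogonal to S_{e,δ} equals 2^{2t} − 2^m + 2^s − 1; i.e., 2^m + 2^{(m-1)/2} − 1 when m is odd, and 3·2^m + 2^{m/2−1} − 1 when m is even. -/
import Mathlib


open Finset

/-- mod-2 inner product on `F_2^n`. -/
def dotp {n : ℕ} (a b : Fin n → ZMod 2) : ZMod 2 := ∑ i, a i * b i

/-- `(-1)^v` for `v ∈ F_2`. -/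
def sgn (v : ZMod 2) : ℤ := (-1 : ℤ) ^ v.val

/-- Integer inner product of the ±1-sequences of two Boolean functions on F_2^s × F_2^t. -/
def seqInnerP {s t : ℕ} (f g : (Fin s → ZMod 2) × (Fin t → ZMod 2) → ZMod 2) : ℤ :=
  ∑ p : (Fin s → ZMod 2) × (Fin t → ZMod 2), sgn (f p) * sgn (g p)

/-- the integer `[y]` represented by the binary vector `y ∈ F_2^s`. -/
def intRep {s : ℕ} (y : Fin s → ZMod 2) : ℕ := ∑ j : Fin s, (y j).val * 2 ^ (j : ℕ)

/-- Construction 1: the component function f_c = c·F, where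
f_i(y,x) = π(γ^{[y]+i})·x for i = 1,…,t. -/
noncomputable def conF {s t : ℕ} (γ : GaloisField 2 t)
    (π : GaloisField 2 t ≃ₗ[ZMod 2] (Fin t → ZMod 2)) (c : Fin t → ZMod 2)
    (p : (Fin s → ZMod 2) × (Fin t → ZMod 2)) : ZMod 2 :=
  ∑ i : Fin t, c i * dotp (π (γ ^ (intRep p.1 + (i : ℕ) + 1))) p.2

/-- Orthogonality of the sets S_{c,α} and S_{e,δ} of Construction 1:
all cross inner products of sequences vanish. -/
def SetPerp {s t : ℕ} (γ : GaloisField 2 t)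
    (π : GaloisField 2 t ≃ₗ[ZMod 2] (Fin t → ZMod 2))
    (c α e δ : Fin t → ZMod 2) : Prop :=
  ∀ β θ : Fin s → ZMod 2,
    seqInnerP
      (fun p : (Fin s → ZMod 2) × (Fin t → ZMod 2) =>
        conF γ π c p + dotp β p.1 + dotp α p.2)
      (fun p : (Fin s → ZMod 2) × (Fin t → ZMod 2) =>
        conF γ π e p + dotp θ p.1 + dotp δ p.2) = 0

lemma sgn_add (a b : ZMod 2) : sgn (a + b) = sgn a * sgn b := by
  revert a b; decide

lemma sgn_zero' : sgn 0 = 1 := by decide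
lemma sgn_one' : sgn 1 = -1 := by decide

lemma dotp_add_left {n} (a b x : Fin n → ZMod 2) : dotp (a + b) x = dotp a x + dotp b x := by
  simp [dotp, add_mul, Finset.sum_add_distrib]

lemma dotp_add_right {n} (a x y : Fin n → ZMod 2) : dotp a (x + y) = dotp a x + dotp a y := by
  simp [dotp, mul_add, Finset.sum_add_distrib]

lemma dotp_zero_left {n} (x : Fin n → ZMod 2) : dotp 0 x = 0 := by simp [dotp]

lemma dotp_sum_left {n} {ι} (s : Finset ι) (f : ι → Fin n → ZMod 2) (x : Fin n → ZMod 2) :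
    dotp (∑ i ∈ s, f i) x = ∑ i ∈ s, dotp (f i) x := by
  simp only [dotp, Finset.sum_apply, Finset.sum_mul]
  exact Finset.sum_comm

lemma dotp_smul_left {n} (r : ZMod 2) (a x : Fin n → ZMod 2) :
    dotp (r • a) x = r * dotp a x := by
  simp [dotp, Finset.mul_sum, mul_assoc]

lemma sum_sgn_dotp {n : ℕ} (a : Fin n → ZMod 2) :
    ∑ x : Fin n → ZMod 2, sgn (dotp a x) = if a = 0 then (2 ^ n : ℤ) else 0 := by
  by_cases h : a = 0
  · subst h
    simp [dotp_zero_left, sgn_zero']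
  · rw [if_neg h]
    obtain ⟨i, hi⟩ : ∃ i, a i ≠ 0 := by
      by_contra hc; push_neg at hc; exact h (funext hc)
    have hai : a i = 1 := by
      have h2 : ∀ v : ZMod 2, v ≠ 0 → v = 1 := by decide
      exact h2 _ hi
    set d : Fin n → ZMod 2 := Pi.single i 1 with hd
    have hda : dotp a d = 1 := by
      rw [dotp, Fintype.sum_eq_single i (fun j hj => by simp [hd, Pi.single_eq_of_ne hj])]
      simp [hd, hai]
    have key : ∑ x : Fin n → ZMod 2, sgn (dotp a (x + d))
        = ∑ x : Fin n → ZMod 2, sgn (dotp a x) :=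
      Fintype.sum_equiv (Equiv.addRight d) _ _ (fun x => rfl)
    have flip : ∀ x : Fin n → ZMod 2, sgn (dotp a (x + d)) = - sgn (dotp a x) := by
      intro x
      rw [dotp_add_right, hda, sgn_add, sgn_one']
      ring
    have hneg : (∑ x : Fin n → ZMod 2, sgn (dotp a x))
        + ∑ x : Fin n → ZMod 2, sgn (dotp a x) = 0 := by
      nth_rewrite 1 [← key]
      rw [← Finset.sum_add_distrib]
      refine Finset.sum_eq_zero fun x _ => ?_
      rw [flip]; ring
    linarith

lemma intRep_succ {n} (y : Fin (n+1) → ZMod 2) :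
    intRep y = (y 0).val + 2 * intRep (fun i => y i.succ) := by
  rw [intRep, Fin.sum_univ_succ]
  simp only [Fin.val_zero, pow_zero, mul_one, Fin.val_succ]
  rw [intRep, Finset.mul_sum]
  congr 1
  exact Finset.sum_congr rfl fun i _ => by rw [pow_succ]; ring

lemma intRep_lt {s} (y : Fin s → ZMod 2) : intRep y < 2 ^ s := by
  induction s with
  | zero => simp [intRep]
  | succ n ih =>
    rw [intRep_succ]
    have h1 : (y 0).val < 2 := ZMod.val_lt _
    have h2 := ih (fun i => y i.succ)
    rw [pow_succ]
    omega

lemma intRep_inj {s} : Function.Injective (intRep (s := s)) := by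
  induction s with
  | zero => intro y y' _; exact Subsingleton.elim y y'
  | succ n ih =>
    intro y y' h
    rw [intRep_succ, intRep_succ] at h
    have h1 : (y 0).val < 2 := ZMod.val_lt _
    have h2 : (y' 0).val < 2 := ZMod.val_lt _
    have hv : (y 0).val = (y' 0).val := by omega
    have ht : intRep (fun i => y i.succ) = intRep (fun i => y' i.succ) := by omega
    have h0 : y 0 = y' 0 := ZMod.val_injective 2 hv
    have htl := ih ht
    funext i
    refine Fin.cases ?_ ?_ i
    · exact h0
    · intro j; exact congrFun htl j

noncomputable def polyU {t : ℕ} (γ : GaloisField 2 t) (c : Fin t → ZMod 2) : GaloisField 2 t :=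
  ∑ i : Fin t, c i • γ ^ (i : ℕ)

lemma conF_eq {s t : ℕ} (γ : GaloisField 2 t)
    (π : GaloisField 2 t ≃ₗ[ZMod 2] (Fin t → ZMod 2)) (c : Fin t → ZMod 2)
    (p : (Fin s → ZMod 2) × (Fin t → ZMod 2)) :
    conF γ π c p = dotp (π (γ ^ (intRep p.1 + 1) * polyU γ c)) p.2 := by
  have h : γ ^ (intRep p.1 + 1) * polyU γ c
      = ∑ i : Fin t, c i • γ ^ (intRep p.1 + (i : ℕ) + 1) := by
    rw [polyU, Finset.mul_sum]
    refine Finset.sum_congr rfl fun i _ => ?_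
    rw [mul_smul_comm, ← pow_add,
      show (intRep p.1 + 1) + (i : ℕ) = intRep p.1 + (i : ℕ) + 1 from by ring]
  rw [conF, h, map_sum, dotp_sum_left]
  exact Finset.sum_congr rfl fun i _ => by rw [map_smul, dotp_smul_left]

lemma zmod2_add_self (v : ZMod 2) : v + v = 0 := by revert v; decide

lemma pi2_add_self {n} (v : Fin n → ZMod 2) : v + v = 0 :=
  funext fun i => zmod2_add_self (v i)

lemma pi2_eq_of_add_eq_zero {n} {v w : Fin n → ZMod 2} (h : v + w = 0) : v = w := by
  have : v + (w + w) = (v + w) + w := by ring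
  rw [pi2_add_self, add_zero, h, zero_add] at this
  exact this

lemma setperp_iff {s t : ℕ} (γ : GaloisField 2 t)
    (π : GaloisField 2 t ≃ₗ[ZMod 2] (Fin t → ZMod 2)) (c α e δ : Fin t → ZMod 2) :
    SetPerp (s := s) γ π c α e δ ↔
      ∀ y : Fin s → ZMod 2,
        γ ^ (intRep y + 1) * (polyU γ c + polyU γ e) ≠ π.symm (α + δ) := by
  classical
  set A : (Fin s → ZMod 2) → (Fin t → ZMod 2) :=
    fun y => π (γ ^ (intRep y + 1) * (polyU γ c + polyU γ e)) + α + δ with hA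
  have main : ∀ β θ : Fin s → ZMod 2,
      seqInnerP
        (fun p : (Fin s → ZMod 2) × (Fin t → ZMod 2) =>
          conF γ π c p + dotp β p.1 + dotp α p.2)
        (fun p : (Fin s → ZMod 2) × (Fin t → ZMod 2) =>
          conF γ π e p + dotp θ p.1 + dotp δ p.2)
      = ∑ y : Fin s → ZMod 2, sgn (dotp (β + θ) y) *
          (if A y = 0 then (2 ^ t : ℤ) else 0) := by
    intro β θ
    rw [seqInnerP, Fintype.sum_prod_type]
    refine Finset.sum_congr rfl fun y _ => ?_
    have hterm : ∀ x : Fin t → ZMod 2,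
        (conF γ π c (y, x) + dotp β y + dotp α x)
          + (conF γ π e (y, x) + dotp θ y + dotp δ x)
        = dotp (β + θ) y + dotp (A y) x := by
      intro x
      simp only [hA, conF_eq, mul_add, map_add, dotp_add_left]
      ring
    calc ∑ x : Fin t → ZMod 2,
          sgn (conF γ π c (y, x) + dotp β y + dotp α x)
            * sgn (conF γ π e (y, x) + dotp θ y + dotp δ x)
        = ∑ x : Fin t → ZMod 2, sgn (dotp (β + θ) y) * sgn (dotp (A y) x) := by
          refine Finset.sum_congr rfl fun x _ => ?_
          rw [← sgn_add, hterm x, sgn_add]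
      _ = sgn (dotp (β + θ) y) * (if A y = 0 then (2 ^ t : ℤ) else 0) := by
          rw [← Finset.mul_sum, sum_sgn_dotp]
  have hA0 : ∀ y, A y = 0 ↔ γ ^ (intRep y + 1) * (polyU γ c + polyU γ e) = π.symm (α + δ) := by
    intro y
    show π (γ ^ (intRep y + 1) * (polyU γ c + polyU γ e)) + α + δ = 0 ↔ _
    rw [add_assoc]
    constructor
    · intro h
      have h1 := pi2_eq_of_add_eq_zero h
      rw [← LinearEquiv.symm_apply_apply π (γ ^ (intRep y + 1) * (polyU γ c + polyU γ e)), h1]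
    · intro h
      rw [show π (γ ^ (intRep y + 1) * (polyU γ c + polyU γ e)) = α + δ from by
        rw [h, LinearEquiv.apply_symm_apply], pi2_add_self]
  constructor
  · intro h y
    have h0 := h 0 0
    rw [main 0 0] at h0
    have hz : ∀ y' : Fin s → ZMod 2, sgn (dotp ((0 : Fin s → ZMod 2) + 0) y') = 1 := by
      intro y'; rw [add_zero, dotp_zero_left, sgn_zero']
    rw [Finset.sum_congr rfl (fun y' _ => by rw [hz y', one_mul])] at h0
    have hnn : ∀ y' ∈ (univ : Finset (Fin s → ZMod 2)),
        (0:ℤ) ≤ if A y' = 0 then (2 ^ t : ℤ) else 0 := by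
      intro y' _; split <;> positivity
    have := (Finset.sum_eq_zero_iff_of_nonneg hnn).mp h0 y (Finset.mem_univ y)
    intro hcontra
    rw [if_pos ((hA0 y).mpr hcontra)] at this
    have : (0:ℤ) < 2 ^ t := by positivity
    omega
  · intro h β θ
    rw [main]
    refine Finset.sum_eq_zero fun y _ => ?_
    rw [if_neg (fun hz => h y ((hA0 y).mp hz)), mul_zero]

lemma minpoly_deg {t : ℕ} (ht : t ≠ 0) (γ : GaloisField 2 t)
    (hγ : ∀ z : GaloisField 2 t, z ≠ 0 → ∃ n : ℕ, γ ^ n = z) :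
    (minpoly (ZMod 2) γ).natDegree = t := by
  have hint : IsIntegral (ZMod 2) γ := IsIntegral.of_finite _ _
  have htop : IntermediateField.adjoin (ZMod 2) {γ} = ⊤ := by
    rw [eq_top_iff]
    rintro z -
    by_cases hz : z = 0
    · exact hz ▸ zero_mem _
    · obtain ⟨n, rfl⟩ := hγ z hz
      exact pow_mem (IntermediateField.mem_adjoin_simple_self _ γ) n
  have h1 := IntermediateField.adjoin.finrank hint
  rw [htop, IntermediateField.finrank_top', GaloisField.finrank 2 ht] at h1
  exact h1.symm

open scoped Classical in
/-- with s = ⌊(m-1)/2⌋, t = ⌊(m+2)/2⌋, the number of sets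
S_{c,α} orthogonal to a fixed S_{e,δ} equals 2^{2t} − 2^m + 2^s − 1, i.e.
2^m + 2^{(m-1)/2} − 1 for odd m and 3·2^m + 2^{m/2−1} − 1 for even m. -/
theorem stmt_10 {m s t : ℕ} (hm : m = s + t)
    (hs : s = (m - 1) / 2) (ht : t = (m + 2) / 2)
    (γ : GaloisField 2 t) (hγ : ∀ z : GaloisField 2 t, z ≠ 0 → ∃ n : ℕ, γ ^ n = z)
    (π : GaloisField 2 t ≃ₗ[ZMod 2] (Fin t → ZMod 2))
    (e δ : Fin t → ZMod 2) :
    (Finset.univ.filter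
        (fun q : (Fin t → ZMod 2) × (Fin t → ZMod 2) =>
          SetPerp (s := s) γ π q.1 q.2 e δ)).card
      = 2 ^ (2 * t) - 2 ^ m + 2 ^ s - 1 ∧
    (Odd m →
      (Finset.univ.filter
          (fun q : (Fin t → ZMod 2) × (Fin t → ZMod 2) =>
            SetPerp (s := s) γ π q.1 q.2 e δ)).card
        = 2 ^ m + 2 ^ ((m - 1) / 2) - 1) ∧
    (Even m →
      (Finset.univ.filter
          (fun q : (Fin t → ZMod 2) × (Fin t → ZMod 2) =>
            SetPerp (s := s) γ π q.1 q.2 e δ)).card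
        = 3 * 2 ^ m + 2 ^ (m / 2 - 1) - 1) := by
  classical
  have hst : s < t := by omega
  have tpos : t ≠ 0 := by omega
  haveI : Fintype (GaloisField 2 t) := Fintype.ofFinite _
  have hK : Fintype.card (GaloisField 2 t) = 2 ^ t := by
    have := GaloisField.card 2 t tpos
    rwa [Nat.card_eq_fintype_card] at this
  have hcardV : Fintype.card (Fin t → ZMod 2) = 2 ^ t := by
    simp [Fintype.card_fun]
  -- linear independence of powers and bijectivity of polyU
  have hdeg := minpoly_deg tpos γ hγ
  have li : LinearIndependent (ZMod 2) fun i : Fin t => γ ^ (i : ℕ) := by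
    have h := linearIndependent_pow (K := ZMod 2) γ
    rwa [hdeg] at h
  have injU : Function.Injective (polyU γ) := by
    intro c c' hcc
    have h0 : ∑ i : Fin t, (c - c') i • γ ^ (i : ℕ) = 0 := by
      have hsplit : ∑ i : Fin t, (c - c') i • γ ^ (i : ℕ) = polyU γ c - polyU γ c' := by
        rw [polyU, polyU, ← Finset.sum_sub_distrib]
        exact Finset.sum_congr rfl fun i _ => by rw [Pi.sub_apply, sub_smul]
      rw [hsplit, hcc, sub_self]
    have hz := Fintype.linearIndependent_iff.mp li _ h0
    funext i
    exact sub_eq_zero.mp (by simpa using hz i)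
  have bijU : Function.Bijective (polyU γ) :=
    (Fintype.bijective_iff_injective_and_card _).mpr ⟨injU, by rw [hcardV, hK]⟩
  -- injectivity of y ↦ γ^(intRep y + 1) * u for u ≠ 0
  have hYinj : ∀ u : (GaloisField 2 t), u ≠ 0 →
      Function.Injective (fun y : Fin s → ZMod 2 => γ ^ (intRep y + 1) * u) := by
    intro u hu y y' hyy
    simp only at hyy
    by_cases hs0 : s = 0
    · subst hs0; exact Subsingleton.elim y y'
    have h2t : 2 ≤ t := by omega
    have hγ0 : γ ≠ 0 := by
      obtain ⟨z, hz0, hz1⟩ : ∃ z : (GaloisField 2 t), z ≠ 0 ∧ z ≠ 1 := by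
        by_contra hc
        push_neg at hc
        have hsub : (univ : Finset (GaloisField 2 t)) ⊆ {0, 1} := by
          intro z _
          rcases eq_or_ne z 0 with h | h
          · simp [h]
          · simp [hc z h]
        have hle := Finset.card_le_card hsub
        have h01 : ({0, 1} : Finset (GaloisField 2 t)).card ≤ 2 :=
          le_trans (Finset.card_insert_le _ _) (by simp)
        rw [Finset.card_univ, hK] at hle
        have h4 : (2:ℕ) ^ 2 ≤ 2 ^ t := Nat.pow_le_pow_right (by norm_num) h2t
        omega
      intro h0
      obtain ⟨n, hn⟩ := hγ z hz0
      cases n with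
      | zero => exact hz1 (by simpa using hn.symm)
      | succ k =>
        rw [h0, zero_pow (Nat.succ_ne_zero k)] at hn
        exact hz0 hn.symm
    have hpos : 0 < orderOf γ := by
      have hog : 0 < orderOf (Units.mk0 γ hγ0) := orderOf_pos _
      have := orderOf_units (y := Units.mk0 γ hγ0)
      simp only [Units.val_mk0] at this
      omega
    have hord : 2 ^ t - 1 ≤ orderOf γ := by
      have hsub : (univ.erase (0 : (GaloisField 2 t))) ⊆
          Finset.image (fun n : Fin (orderOf γ) => γ ^ (n : ℕ)) univ := by
        intro z hz
        obtain ⟨n, hn⟩ := hγ z (Finset.ne_of_mem_erase hz)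
        exact Finset.mem_image.mpr ⟨⟨n % orderOf γ, Nat.mod_lt _ hpos⟩, Finset.mem_univ _,
          by simp [pow_mod_orderOf, hn]⟩
      have hle := Finset.card_le_card hsub
      have h1 : (univ.erase (0 : (GaloisField 2 t))).card = 2 ^ t - 1 := by
        rw [Finset.card_erase_of_mem (Finset.mem_univ _), Finset.card_univ, hK]
      have h2 : (Finset.image (fun n : Fin (orderOf γ) => γ ^ (n : ℕ)) univ).card
          ≤ orderOf γ := le_trans Finset.card_image_le (by simp)
      omega
    have hpow2 : (2:ℕ) ^ s < 2 ^ t := Nat.pow_lt_pow_right (by norm_num) hst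
    have key : ∀ a b : ℕ, 1 ≤ a → a ≤ b → b ≤ 2 ^ s → γ ^ a = γ ^ b → a = b := by
      intro a b ha hab hb hgab
      by_contra hne
      have hd : 0 < b - a := by omega
      have hmul : γ ^ a * γ ^ (b - a) = γ ^ a * 1 := by
        rw [mul_one, ← pow_add, show a + (b - a) = b from by omega]
        exact hgab.symm
      have hone : γ ^ (b - a) = 1 := mul_left_cancel₀ (pow_ne_zero a hγ0) hmul
      have := orderOf_le_of_pow_eq_one hd hone
      omega
    have ha := intRep_lt y
    have hb := intRep_lt y'
    have hexp : intRep y + 1 = intRep y' + 1 := by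
      rcases le_total (intRep y + 1) (intRep y' + 1) with h | h
      · exact key _ _ (by omega) h (by omega) (mul_right_cancel₀ hu hyy)
      · exact (key _ _ (by omega) h (by omega) (mul_right_cancel₀ hu hyy.symm)).symm
    exact intRep_inj (by omega : intRep y = intRep y')
  -- transfer the count to (GaloisField 2 t) × (GaloisField 2 t)
  have hmain : (univ.filter
        (fun q : (Fin t → ZMod 2) × (Fin t → ZMod 2) =>
          SetPerp (s := s) γ π q.1 q.2 e δ)).card
      = (univ.filter (fun w : (GaloisField 2 t) × (GaloisField 2 t) =>
          ∀ y : Fin s → ZMod 2, γ ^ (intRep y + 1) * w.1 ≠ w.2)).card := by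
    refine Finset.card_bij
      (fun q _ => (polyU γ q.1 + polyU γ e, π.symm (q.2 + δ))) ?_ ?_ ?_
    · intro q hq
      simp only [Finset.mem_filter, Finset.mem_univ, true_and] at hq ⊢
      exact (setperp_iff γ π q.1 q.2 e δ).mp hq
    · intro q1 h1 q2 h2 heq
      have e1 : polyU γ q1.1 + polyU γ e = polyU γ q2.1 + polyU γ e :=
        congrArg Prod.fst heq
      have e2 : π.symm (q1.2 + δ) = π.symm (q2.2 + δ) := congrArg Prod.snd heq
      have hq1 : q1.1 = q2.1 := injU (by exact add_right_cancel e1)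
      have hq2 : q1.2 = q2.2 := add_right_cancel (π.symm.injective e2)
      exact Prod.ext hq1 hq2
    · intro w hw
      simp only [Finset.mem_filter, Finset.mem_univ, true_and] at hw
      obtain ⟨c, hc⟩ := bijU.2 (w.1 + polyU γ e)
      have hU : polyU γ c + polyU γ e = w.1 := by
        rw [hc, add_assoc, CharTwo.add_self_eq_zero, add_zero]
      have hα : π.symm ((π w.2 + δ) + δ) = w.2 := by
        rw [add_assoc, pi2_add_self, add_zero, LinearEquiv.symm_apply_apply]
      refine ⟨(c, π w.2 + δ), ?_, ?_⟩
      · simp only [Finset.mem_filter, Finset.mem_univ, true_and]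
        rw [setperp_iff, hU, hα]
        exact hw
      · show (polyU γ c + polyU γ e, π.symm ((π w.2 + δ) + δ)) = w
        rw [hU, hα]
  rw [hmain]
  -- count on (GaloisField 2 t) × (GaloisField 2 t)
  have fib0 : (univ.filter (fun v : (GaloisField 2 t) =>
      ∀ y : Fin s → ZMod 2, γ ^ (intRep y + 1) * (0 : (GaloisField 2 t)) ≠ v)).card = 2 ^ t - 1 := by
    have hset : (univ.filter (fun v : (GaloisField 2 t) =>
        ∀ y : Fin s → ZMod 2, γ ^ (intRep y + 1) * (0 : (GaloisField 2 t)) ≠ v)) = univ.erase 0 := by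
      ext v
      simp only [Finset.mem_filter, Finset.mem_univ, true_and, Finset.mem_erase, and_true,
        mul_zero]
      exact ⟨fun h h0 => h (fun _ => 0) h0.symm, fun h _ h0 => h h0.symm⟩
    rw [hset, Finset.card_erase_of_mem (Finset.mem_univ _), Finset.card_univ, hK]
  have fibne : ∀ u : (GaloisField 2 t), u ≠ 0 →
      (univ.filter (fun v : (GaloisField 2 t) =>
        ∀ y : Fin s → ZMod 2, γ ^ (intRep y + 1) * u ≠ v)).card = 2 ^ t - 2 ^ s := by
    intro u hu
    have himg : (Finset.image (fun y : Fin s → ZMod 2 => γ ^ (intRep y + 1) * u) univ).card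
        = 2 ^ s := by
      rw [Finset.card_image_of_injective _ (hYinj u hu), Finset.card_univ]
      simp [Fintype.card_fun]
    have hset : (univ.filter (fun v : (GaloisField 2 t) =>
        ∀ y : Fin s → ZMod 2, γ ^ (intRep y + 1) * u ≠ v))
        = univ \ Finset.image (fun y : Fin s → ZMod 2 => γ ^ (intRep y + 1) * u) univ := by
      ext v
      simp only [Finset.mem_filter, Finset.mem_univ, true_and, Finset.mem_sdiff,
        Finset.mem_image, not_exists]
    rw [hset, Finset.card_sdiff_of_subset (Finset.subset_univ _), Finset.card_univ, hK, himg]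
  have hcount : (univ.filter (fun w : (GaloisField 2 t) × (GaloisField 2 t) =>
      ∀ y : Fin s → ZMod 2, γ ^ (intRep y + 1) * w.1 ≠ w.2)).card
      = 2 ^ (2 * t) - 2 ^ m + 2 ^ s - 1 := by
    rw [Finset.card_filter, Fintype.sum_prod_type]
    have hfib : ∀ u : (GaloisField 2 t),
        (∑ v : (GaloisField 2 t), if (∀ y : Fin s → ZMod 2, γ ^ (intRep y + 1) * u ≠ v) then (1:ℕ) else 0)
        = (univ.filter (fun v : (GaloisField 2 t) =>
            ∀ y : Fin s → ZMod 2, γ ^ (intRep y + 1) * u ≠ v)).card :=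
      fun u => (Finset.card_filter _ _).symm
    rw [Finset.sum_congr rfl (fun u _ => hfib u),
      ← Finset.add_sum_erase _ _ (Finset.mem_univ (0 : (GaloisField 2 t))), fib0,
      Finset.sum_congr rfl (fun u hu => fibne u (Finset.ne_of_mem_erase hu)),
      Finset.sum_const, Finset.card_erase_of_mem (Finset.mem_univ _), Finset.card_univ, hK,
      smul_eq_mul]
    have h1 : (1:ℕ) ≤ 2 ^ s := Nat.one_le_two_pow
    have h2 : (2:ℕ) ^ s ≤ 2 ^ t := le_of_lt (Nat.pow_lt_pow_right (by norm_num) hst)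
    have h3 : (1:ℕ) ≤ 2 ^ t := Nat.one_le_two_pow
    have e1 : (2:ℕ) ^ (2 * t) = 2 ^ t * 2 ^ t := by rw [two_mul, pow_add]
    have e2 : (2:ℕ) ^ m = 2 ^ s * 2 ^ t := by rw [hm, pow_add]
    rw [e1, e2]
    have h4 : (2:ℕ) ^ s * 2 ^ t ≤ 2 ^ t * 2 ^ t := Nat.mul_le_mul_right _ h2
    have h5 : (1:ℕ) ≤ 2 ^ t * 2 ^ t - 2 ^ s * 2 ^ t + 2 ^ s :=
      le_trans h1 (Nat.le_add_left _ _)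
    zify [h2, h3, h4, h5]
    ring
  rw [hcount]
  refine ⟨rfl, ?_, ?_⟩
  · intro hodd
    obtain ⟨k, hk⟩ := hodd
    have h2t : 2 * t = m + 1 := by omega
    have hsm : (m - 1) / 2 = s := hs.symm
    rw [h2t, hsm, pow_succ]
    have hX : (1:ℕ) ≤ 2 ^ m := Nat.one_le_two_pow
    generalize (2:ℕ) ^ m = X at *
    generalize (2:ℕ) ^ s = Y at *
    omega
  · intro heven
    obtain ⟨k, hk⟩ := heven
    have h2t : 2 * t = m + 2 := by omega
    have hsm : m / 2 - 1 = s := by omega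
    rw [h2t, hsm, pow_add]
    have hX : (1:ℕ) ≤ 2 ^ m := Nat.one_le_two_pow
    generalize (2:ℕ) ^ m = X at *
    generalize (2:ℕ) ^ s = Y at *
    norm_num
    omega
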